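/- Let n = 2 in the piecewise Möbius welding normalization: if ω is a C¹ increasing homeomorphism of the extended real line, Möbius on (−∞,0), on (0,1), and on (1,∞), fixing ∞ with ω'(∞) = 1, ω(0) = 0 and ω(1) = y₂ > 0, then ω is the identity map. In particular y₂ = 1. -/

import Mathlib

/-!
For a Möbius map `m`, `m'(x) m'(y) (x - y)² = (m x - m y)²`. Since `ω` is C¹, this identity
survives at the endpoints `0, 1` of the Möbius piece, where the slope-one affine pieces force
`ω'(0) = ω'(1) = 1`; hence `y₂² = 1`, i.e. `y₂ = 1`. A Möbius map fixing `0` and `1` with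
derivative `1` at `0` is the identity, and continuity at `0` and `1` kills the translations.
-/

open Set

lemma eqOn_closure_of_eqOn_add_const {ω : ℝ → ℝ} (hω : ContDiff ℝ 1 ω) {S : Set ℝ} (hS : IsOpen S)
    {b : ℝ} (h : EqOn ω (· + b) S) :
    EqOn ω (· + b) (closure S) ∧ EqOn (deriv ω) (fun _ ↦ 1) (closure S) := by
  refine ⟨h.closure hω.continuous (by fun_prop), ?_⟩
  have hderiv : EqOn (deriv ω) (fun _ ↦ 1) S := fun x hx ↦ by
    simpa using h.deriv hS hx
  exact hderiv.closure (hω.continuous_deriv le_rfl) continuous_const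

def IsMobiusOn (ω : ℝ → ℝ) (S : Set ℝ) (p q r s : ℝ) : Prop :=
  ∀ x ∈ S, r * x + s ≠ 0 ∧ ω x = (p * x + q) / (r * x + s)

lemma hasDerivAt_mobius {p q r s x : ℝ} (hx : r * x + s ≠ 0) :
    HasDerivAt (fun y ↦ (p * y + q) / (r * y + s)) ((p * s - q * r) / (r * x + s) ^ 2) x := by
  have hnum : HasDerivAt (fun y ↦ p * y + q) p x := by
    simpa using ((hasDerivAt_id x).const_mul p).add_const q
  have hden : HasDerivAt (fun y ↦ r * y + s) r x := by
    simpa using ((hasDerivAt_id x).const_mul r).add_const s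
  exact (hnum.div hden hx).congr_deriv (by ring)

namespace IsMobiusOn

variable {ω : ℝ → ℝ} {S : Set ℝ} {p q r s : ℝ}

lemma denom_mul_eq_on_closure (h : IsMobiusOn ω S p q r s) (hω : Continuous ω) :
    EqOn (fun x ↦ (r * x + s) * ω x) (fun x ↦ p * x + q) (closure S) := by
  refine EqOn.closure (fun x hx ↦ ?_) (by fun_prop) (by fun_prop)
  obtain ⟨hne, hx⟩ := h x hx
  simp only [hx]
  field_simp

lemma sq_denom_mul_deriv_eq_on_closure (h : IsMobiusOn ω S p q r s) (hS : IsOpen S)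
    (hω : ContDiff ℝ 1 ω) :
    EqOn (fun x ↦ (r * x + s) ^ 2 * deriv ω x) (fun _ ↦ p * s - q * r) (closure S) := by
  have hcont := hω.continuous_deriv le_rfl
  refine EqOn.closure (fun x hx ↦ ?_) (by fun_prop) continuous_const
  have heq : EqOn ω (fun y ↦ (p * y + q) / (r * y + s)) S := fun y hy ↦ (h y hy).2
  simp only [heq.deriv hS hx, (hasDerivAt_mobius (h x hx).1).deriv]
  field_simp [(h x hx).1]

end IsMobiusOn

/-- The Möbius derivative identity `m'(x) m'(y) (x - y)² = (m x - m y)²`, with `u = m x`,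
`v = m y`, `u' = m'(x)`, `v' = m'(y)` given through their denominator-free relations. -/
lemma mobius_deriv_mul_deriv_mul_sq {p q r s x y u v u' v' : ℝ} (hD : p * s - q * r ≠ 0)
    (hu : (r * x + s) * u = p * x + q) (hv : (r * y + s) * v = p * y + q)
    (hu' : (r * x + s) ^ 2 * u' = p * s - q * r) (hv' : (r * y + s) ^ 2 * v' = p * s - q * r) :
    u' * v' * (x - y) ^ 2 = (u - v) ^ 2 := by
  have hx : r * x + s ≠ 0 := fun h ↦ hD (by simp [← hu', h])
  have hy : r * y + s ≠ 0 := fun h ↦ hD (by simp [← hv', h])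
  rw [eq_div_of_mul_eq hx (by linarith : u * (r * x + s) = p * x + q),
    eq_div_of_mul_eq hy (by linarith : v * (r * y + s) = p * y + q),
    eq_div_of_mul_eq (pow_ne_zero 2 hx) (by linarith : u' * (r * x + s) ^ 2 = p * s - q * r),
    eq_div_of_mul_eq (pow_ne_zero 2 hy) (by linarith : v' * (r * y + s) ^ 2 = p * s - q * r)]
  field_simp
  ring

lemma eq_of_mobius_fixing_zero_one {p q r s x u : ℝ} (hD : 0 < p * s - q * r) (h0 : q = 0)
    (h1 : r + s = p + q) (hderiv0 : s ^ 2 = p * s - q * r) (hx : (r * x + s) * u = p * x + q) :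
    u = x := by
  subst h0
  have hs : s ≠ 0 := by rintro rfl; simp at hD
  have hps : p = s := mul_right_cancel₀ hs (by linarith)
  have hr : r = 0 := by linarith
  subst hps hr
  exact mul_left_cancel₀ hs (by linarith)

theorem welding_two_pieces_is_identity_general
    (y₂ : ℝ) (hy₂ : 0 < y₂)
    (ω : ℝ → ℝ)
    (hC1 : ContDiff ℝ 1 ω)
    (hleft : ∃ b : ℝ, ∀ x : ℝ, x < 0 → ω x = x + b)
    (hright : ∃ b : ℝ, ∀ x : ℝ, 1 < x → ω x = x + b)
    (hmid : ∃ p q r s : ℝ, p * s - q * r > 0 ∧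
      ∀ x ∈ Set.Ioo (0 : ℝ) 1, r * x + s ≠ 0 ∧ ω x = (p * x + q) / (r * x + s))
    (h0 : ω 0 = 0) (h1 : ω 1 = y₂) :
    (∀ x : ℝ, ω x = x) ∧ y₂ = 1 := by
  obtain ⟨b, hb⟩ := hleft
  obtain ⟨b', hb'⟩ := hright
  obtain ⟨p, q, r, s, hD, hmob⟩ := hmid
  obtain ⟨hωL, hdL⟩ := eqOn_closure_of_eqOn_add_const hC1 isOpen_Iio hb
  obtain ⟨hωR, hdR⟩ := eqOn_closure_of_eqOn_add_const hC1 isOpen_Ioi hb'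
  rw [closure_Iio] at hωL hdL
  rw [closure_Ioi] at hωR hdR
  have hmul := IsMobiusOn.denom_mul_eq_on_closure hmob hC1.continuous
  have hsq := IsMobiusOn.sq_denom_mul_deriv_eq_on_closure hmob isOpen_Ioo hC1
  rw [closure_Ioo zero_ne_one] at hmul hsq
  have h0' := hmul (left_mem_Icc.2 zero_le_one)
  have h1' := hmul (right_mem_Icc.2 zero_le_one)
  have hd0 := hsq (left_mem_Icc.2 zero_le_one)
  have hd1 := hsq (right_mem_Icc.2 zero_le_one)
  simp only [hdL self_mem_Iic, hdR self_mem_Ici, h0, h1] at h0' h1' hd0 hd1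
  have hy : y₂ = 1 := by
    have := mobius_deriv_mul_deriv_mul_sq hD.ne' h1' h0' hd1 hd0
    nlinarith
  rw [hy] at h1'
  have hid : ∀ x ∈ Icc (0 : ℝ) 1, ω x = x := fun x hx ↦
    eq_of_mobius_fixing_zero_one hD (by linarith) (by linarith) (by linarith) (hmul hx)
  refine ⟨fun x ↦ ?_, hy⟩
  rcases le_or_gt x 0 with hx0 | hx0
  · have hb0 : b = 0 := by linarith [hωL self_mem_Iic]
    simp [hωL hx0, hb0]
  rcases le_or_gt x 1 with hx1 | hx1
  · exact hid x ⟨hx0.le, hx1⟩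
  · have hb1 : b' = 0 := by linarith [hωR self_mem_Ici, hid 1 (right_mem_Icc.2 zero_le_one)]
    simp [hωR hx1.le, hb1]

/-- n = 2 case of the piecewise Möbius welding normalization: if `ω` is a C¹
increasing homeomorphism of `ℝ` which is affine with slope 1 on `(-∞,0)` and on
`(1,∞)` (i.e. fixes `∞` with `ω'(∞) = 1`), is an increasing Möbius map on
`(0,1)`, and satisfies `ω(0) = 0` and `ω(1) = y₂ > 0`, then `ω` is the identity
map; in particular `y₂ = 1`. -/
theorem welding_two_pieces_is_identity
    (y₂ : ℝ) (hy₂ : 0 < y₂)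
    (ω : ℝ → ℝ) (hmono : StrictMono ω) (hsurj : Function.Surjective ω)
    (hC1 : ContDiff ℝ 1 ω)
    (hleft : ∃ b : ℝ, ∀ x : ℝ, x < 0 → ω x = x + b)
    (hright : ∃ b : ℝ, ∀ x : ℝ, 1 < x → ω x = x + b)
    (hmid : ∃ p q r s : ℝ, p * s - q * r > 0 ∧
      ∀ x ∈ Set.Ioo (0 : ℝ) 1, r * x + s ≠ 0 ∧ ω x = (p * x + q) / (r * x + s))
    (h0 : ω 0 = 0) (h1 : ω 1 = y₂) :
    (∀ x : ℝ, ω x = x) ∧ y₂ = 1 :=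
  welding_two_pieces_is_identity_general y₂ hy₂ ω hC1 hleft hright hmid h0 h1
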